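/- arXiv:2004.14154 — 2 statements merged into one kernel-verified Lean document; each statement's English description precedes it below -/
import Mathlib

section
/- Let V be a real inner product space and let a, b ∈ V with a ≠ b and a ≠ −b. Then there exist a real number φ and vectors p, q ∈ V with ⟨p, q⟩ = 0 such that a = (cosh φ)p + (sinh φ)q and b = (sinh φ)p + (cosh φ)q. -/
/-!
Undo the hyperbolic rotation: `p = cosh φ • a - sinh φ • b` and `q = -sinh φ • a + cosh φ • b`
satisfy `a = cosh φ • p + sinh φ • q`, `b = sinh φ • p + cosh φ • q` for every `φ`, and
`p ± q` are `e^{-φ} (a + b)` and `e^{φ} (a - b)` up to the factor 2. So `p ⊥ q` means that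
these two vectors have equal norms, and since `a ± b ≠ 0` one can choose `φ` to balance
`e^{-φ} ‖a + b‖` against `e^{φ} ‖a - b‖`.
-/

open Real

section HyperbolicRotation

variable {V : Type*} [AddCommGroup V] [Module ℝ V]

lemma eq_cosh_smul_add_sinh_smul_of_inverse_rotation (φ : ℝ) (a b : V) :
    a = cosh φ • (cosh φ • a - sinh φ • b) + sinh φ • (-sinh φ • a + cosh φ • b) ∧
      b = sinh φ • (cosh φ • a - sinh φ • b) + cosh φ • (-sinh φ • a + cosh φ • b) := by
  constructor <;> match_scalars <;> linarith [cosh_sq_sub_sinh_sq φ]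

lemma cosh_smul_sub_sinh_smul_eq (φ : ℝ) (a b : V) :
    cosh φ • a - sinh φ • b = (1 / 2 : ℝ) • (exp (-φ) • (a + b) + exp φ • (a - b)) := by
  rw [cosh_eq, sinh_eq]
  module

lemma neg_sinh_smul_add_cosh_smul_eq (φ : ℝ) (a b : V) :
    -sinh φ • a + cosh φ • b = (1 / 2 : ℝ) • (exp (-φ) • (a + b) - exp φ • (a - b)) := by
  rw [cosh_eq, sinh_eq]
  module

end HyperbolicRotation

lemma inner_inverse_rotation_eq_zero {V : Type*} [NormedAddCommGroup V] [InnerProductSpace ℝ V]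
    {φ : ℝ} {a b : V} (h : exp (-φ) * ‖a + b‖ = exp φ * ‖a - b‖) :
    inner ℝ (cosh φ • a - sinh φ • b) (-sinh φ • a + cosh φ • b) = 0 := by
  rw [cosh_smul_sub_sinh_smul_eq, neg_sinh_smul_add_cosh_smul_eq, real_inner_smul_left,
    real_inner_smul_right, (real_inner_add_sub_eq_zero_iff _ _).2, mul_zero, mul_zero]
  rwa [norm_smul, norm_smul, norm_of_nonneg (exp_pos _).le, norm_of_nonneg (exp_pos _).le]

lemma exists_exp_neg_mul_eq_exp_mul {x y : ℝ} (hx : 0 < x) (hy : 0 < y) :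
    ∃ φ : ℝ, exp (-φ) * x = exp φ * y := by
  refine ⟨(log x - log y) / 2, ?_⟩
  -- both sides equal `√(x y)`
  calc exp (-((log x - log y) / 2)) * x = exp (-((log x - log y) / 2) + log x) := by
        rw [exp_add, exp_log hx]
    _ = exp ((log x - log y) / 2 + log y) := by ring_nf
    _ = exp ((log x - log y) / 2) * y := by rw [exp_add, exp_log hy]

/-- Principal-axes decomposition of a jay-vector: if `a ≠ ±b` then there are `φ` and
orthogonal vectors `p, q` with `a + jb = e^{jφ}(p + jq)`. -/
theorem stmt10 {V : Type*} [NormedAddCommGroup V] [InnerProductSpace ℝ V]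
    (a b : V) (hab : a ≠ b) (hab' : a ≠ -b) :
    ∃ (φ : ℝ) (p q : V), (inner ℝ p q : ℝ) = 0 ∧
      a = Real.cosh φ • p + Real.sinh φ • q ∧
      b = Real.sinh φ • p + Real.cosh φ • q := by
  have hsum : 0 < ‖a + b‖ := norm_pos_iff.2 fun h => hab' (eq_neg_of_add_eq_zero_left h)
  have hdiff : 0 < ‖a - b‖ := norm_pos_iff.2 (sub_ne_zero.2 hab)
  obtain ⟨φ, hφ⟩ := exists_exp_neg_mul_eq_exp_mul hsum hdiff
  exact ⟨φ, _, _, inner_inverse_rotation_eq_zero hφ,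
    eq_cosh_smul_add_sinh_smul_of_inverse_rotation φ a b⟩
end

section
/- Let n be a natural number, H a real symmetric n×n matrix, a, b : Fin n → ℝ, and T, α⁺, α⁻ real numbers. Suppose ∑ᵢⱼ Hᵢⱼaᵢaⱼ + ∑ᵢⱼ Hᵢⱼbᵢbⱼ = 0 and ∑ᵢⱼ Hᵢⱼaᵢbⱼ = 0. Define φ : ℝⁿ → ℝ by φ(x) = ( α⁺ cosh(T b·x) + α⁻ sinh(T b·x) ) exp(T a·x), where b·x = ∑ᵢ bᵢxᵢ. Then φ is smooth and satisfies ∑ᵢⱼ Hᵢⱼ ∂²φ/∂xᵢ∂xⱼ = 0 at every point of ℝⁿ. -/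
lemma lin_aux (n : ℕ) (T : ℝ) (a : Fin n → ℝ) :
    ∃ L : (Fin n → ℝ) →L[ℝ] ℝ,
      (∀ x, HasFDerivAt (fun y : Fin n → ℝ => T * ∑ i, a i * y i) L x) ∧
      ∀ i, L (Pi.single i 1) = T * a i := by
  refine ⟨T • ∑ i, a i • (ContinuousLinearMap.proj i : (Fin n → ℝ) →L[ℝ] ℝ), ?_, ?_⟩
  · intro x
    have h : (fun y : Fin n → ℝ => T * ∑ i, a i * y i)
        = fun y => (T • ∑ i, a i • (ContinuousLinearMap.proj i : (Fin n → ℝ) →L[ℝ] ℝ)) y := by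
      funext y
      simp [ContinuousLinearMap.sum_apply, smul_eq_mul]
    rw [h]
    exact (T • ∑ i, a i • (ContinuousLinearMap.proj i : (Fin n → ℝ) →L[ℝ] ℝ)).hasFDerivAt
  · intro i
    simp [ContinuousLinearMap.sum_apply, smul_eq_mul, Pi.single_apply, Finset.sum_ite_eq',
      mul_comm]

/-- Jay-vector plane-wave solutions of the hyperbolic PDE `Hᵢⱼ ∂²φ/∂xᵢ∂xⱼ = 0`: if
`Hᵢⱼaᵢaⱼ + Hᵢⱼbᵢbⱼ = 0` and `Hᵢⱼaᵢbⱼ = 0` then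
`φ(x) = (α⁺ cosh(T b·x) + α⁻ sinh(T b·x)) exp(T a·x)` is a smooth solution. -/
theorem stmt19 (n : ℕ) (H : Matrix (Fin n) (Fin n) ℝ) (hH : H.IsSymm)
    (a b : Fin n → ℝ) (T αp αm : ℝ)
    (h1 : ∑ i, ∑ j, H i j * a i * a j + ∑ i, ∑ j, H i j * b i * b j = 0)
    (h2 : ∑ i, ∑ j, H i j * a i * b j = 0)
    (φ : (Fin n → ℝ) → ℝ)
    (hφ : φ = fun x => (αp * Real.cosh (T * ∑ i, b i * x i)
        + αm * Real.sinh (T * ∑ i, b i * x i)) * Real.exp (T * ∑ i, a i * x i)) :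
    ContDiff ℝ (⊤ : ℕ∞) φ ∧
      ∀ x : Fin n → ℝ, ∑ i, ∑ j, H i j *
        fderiv ℝ (fun y => fderiv ℝ φ y (Pi.single i 1)) x (Pi.single j 1) = 0 := by
  obtain ⟨La, hLa, hLai⟩ := lin_aux n T a
  obtain ⟨Lb, hLb, hLbi⟩ := lin_aux n T b
  -- abbreviations
  set u : (Fin n → ℝ) → ℝ := fun y => T * ∑ i, a i * y i with hu
  set v : (Fin n → ℝ) → ℝ := fun y => T * ∑ i, b i * y i with hv
  set c : (Fin n → ℝ) → ℝ := fun y => αp * Real.cosh (v y) + αm * Real.sinh (v y) with hc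
  set s : (Fin n → ℝ) → ℝ := fun y => αp * Real.sinh (v y) + αm * Real.cosh (v y) with hs
  set e : (Fin n → ℝ) → ℝ := fun y => Real.exp (u y) with he
  -- smoothness of u, v
  have hulin : ∀ (w : Fin n → ℝ), ContDiff ℝ (⊤ : ℕ∞) (fun y : Fin n → ℝ => T * ∑ i, w i * y i) := by
    intro w
    exact contDiff_const.mul (ContDiff.sum fun i _ =>
      contDiff_const.mul ((ContinuousLinearMap.proj i : (Fin n → ℝ) →L[ℝ] ℝ).contDiff))
  have hsmooth : ContDiff ℝ (⊤ : ℕ∞) φ := by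
    rw [hφ]
    exact (((contDiff_const.mul (Real.contDiff_cosh.comp (hulin b)))).add
      (contDiff_const.mul (Real.contDiff_sinh.comp (hulin b)))).mul
      (Real.contDiff_exp.comp (hulin a))
  refine ⟨hsmooth, ?_⟩
  intro x
  -- first derivative of φ
  have hcd : ∀ y, HasFDerivAt c (αp • (Real.sinh (v y) • Lb) + αm • (Real.cosh (v y) • Lb)) y :=
    fun y => (((hLb y).cosh).const_mul αp).add (((hLb y).sinh).const_mul αm)
  have hed : ∀ y, HasFDerivAt e (Real.exp (u y) • La) y := fun y => (hLa y).exp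
  have hφd : ∀ y, HasFDerivAt φ
      (c y • (Real.exp (u y) • La) + e y •
        (αp • (Real.sinh (v y) • Lb) + αm • (Real.cosh (v y) • Lb))) y := by
    intro y
    rw [hφ]
    exact (hcd y).mul (hed y)
  -- evaluate first derivative on basis vectors
  have hfd1 : ∀ i, (fun y => fderiv ℝ φ y (Pi.single i 1))
      = fun y => T * e y * (c y * a i + s y * b i) := by
    intro i
    funext y
    rw [(hφd y).fderiv]
    simp only [ContinuousLinearMap.add_apply, ContinuousLinearMap.smul_apply, hLai, hLbi,
      smul_eq_mul, he, hs]
    ring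
  -- second derivative
  have hec : ∀ y, HasFDerivAt (fun y => e y * c y)
      (e y • (αp • (Real.sinh (v y) • Lb) + αm • (Real.cosh (v y) • Lb)) +
        c y • (Real.exp (u y) • La)) y := fun y => (hed y).mul (hcd y)
  have hsd : ∀ y, HasFDerivAt s (αp • (Real.cosh (v y) • Lb) + αm • (Real.sinh (v y) • Lb)) y :=
    fun y => (((hLb y).sinh).const_mul αp).add (((hLb y).cosh).const_mul αm)
  have hes : ∀ y, HasFDerivAt (fun y => e y * s y)
      (e y • (αp • (Real.cosh (v y) • Lb) + αm • (Real.sinh (v y) • Lb)) +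
        s y • (Real.exp (u y) • La)) y := fun y => (hed y).mul (hsd y)
  have hfd2 : ∀ i j, fderiv ℝ (fun y => fderiv ℝ φ y (Pi.single i 1)) x (Pi.single j 1)
      = T^2 * e x * (c x * a i * a j + s x * a i * b j + s x * b i * a j + c x * b i * b j) := by
    intro i j
    rw [hfd1 i]
    have hg : ∀ y, HasFDerivAt (fun y => T * e y * (c y * a i + s y * b i))
        ((T * a i) • (e y • (αp • (Real.sinh (v y) • Lb) + αm • (Real.cosh (v y) • Lb)) +
          c y • (Real.exp (u y) • La)) +
         (T * b i) • (e y • (αp • (Real.cosh (v y) • Lb) + αm • (Real.sinh (v y) • Lb)) +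
          s y • (Real.exp (u y) • La))) y := by
      intro y
      have h := (((hec y).const_mul (T * a i)).add ((hes y).const_mul (T * b i)))
      have heq : (fun y => T * a i * (e y * c y) + T * b i * (e y * s y))
          = fun y => T * e y * (c y * a i + s y * b i) := by funext y; ring
      rw [← heq]
      exact h
    rw [(hg x).fderiv]
    simp only [ContinuousLinearMap.add_apply, ContinuousLinearMap.smul_apply, hLai, hLbi,
      smul_eq_mul, he, hs, hc]
    ring
  simp only [hfd2]
  -- algebraic finish
  have expand : ∀ i j, H i j * (T^2 * e x *
      (c x * a i * a j + s x * a i * b j + s x * b i * a j + c x * b i * b j))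
      = T^2 * e x * c x * (H i j * a i * a j) + T^2 * e x * s x * (H i j * a i * b j)
        + T^2 * e x * s x * (H i j * b i * a j) + T^2 * e x * c x * (H i j * b i * b j) := by
    intro i j; ring
  simp_rw [expand, Finset.sum_add_distrib, ← Finset.mul_sum]
  have hba : ∑ i, ∑ j, H i j * b i * a j = ∑ i, ∑ j, H i j * a i * b j := by
    rw [Finset.sum_comm]
    exact Finset.sum_congr rfl fun i _ => Finset.sum_congr rfl fun j _ => by
      rw [hH.apply]; ring
  rw [hba, h2]
  have hbb : ∑ i, ∑ j, H i j * b i * b j = -∑ i, ∑ j, H i j * a i * a j := by linarith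
  rw [hbb]
  ring
end
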